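/- arXiv:2312.11021 — 6 statements merged into one kernel-verified Lean document; each statement's English description precedes it below -/
import Mathlib

section
/- Let (Ω, μ) be a finite measure space, let a ≤ b be real numbers, let γ > 0, and let U_ad = {u ∈ L²(μ) : a ≤ u ≤ b μ-a.e.}. Let z ∈ L²(μ) and u ∈ U_ad. Then the variational inequality ∫_Ω (γu + z)(v − u) dμ ≥ 0 for all v ∈ U_ad holds if and only if u(x) = max(a, min(−z(x)/γ, b)) for μ-a.e. x ∈ Ω. (This is the pointwise projection formula u = P_{U_ad}{−z/γ} characterizing the first-order optimality condition.) -/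
/-!
Write `w = -z/γ` and `P = max a (min w b)`, so that `γu + z = γ (u - w)`. Pointwise, `P` is the
projection of `w` onto `[a, b]`: `(P - w)(t - P) ≥ 0` for every `t ∈ [a, b]`. Integrating this with
`t = v` gives the variational inequality for `u = P`. Conversely, testing the inequality with `v = P`
and adding the integrated pointwise inequality with `t = u` gives `-∫ (u - P)² ≥ 0`, so `u = P` a.e.
-/

open MeasureTheory

lemma clamp_sub_mul_sub_clamp_nonneg {a b t : ℝ} (w : ℝ) (hat : a ≤ t) (htb : t ≤ b) :
    0 ≤ (max a (min w b) - w) * (t - max a (min w b)) := by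
  rcases le_total w a with hwa | haw
  · rw [min_eq_left (hwa.trans (hat.trans htb)), max_eq_left hwa]
    exact mul_nonneg (by linarith) (by linarith)
  · rcases le_total w b with hwb | hbw
    · simp [min_eq_left hwb, max_eq_right haw]
    · rw [min_eq_right hbw, max_eq_right (hat.trans htb)]
      exact mul_nonneg_of_nonpos_of_nonpos (by linarith) (by linarith)

section Clamp

variable {Ω : Type*} [MeasurableSpace Ω] {μ : Measure Ω} {a b : ℝ} {w : Ω → ℝ}

lemma memLp_clamp [IsFiniteMeasure μ] {p : ENNReal} (hab : a ≤ b)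
    (hw : AEStronglyMeasurable w μ) : MemLp (fun x => max a (min (w x) b)) p μ := by
  refine .of_bound (aestronglyMeasurable_const.sup (hw.inf aestronglyMeasurable_const))
    (max |a| |b|) (.of_forall fun x => ?_)
  exact abs_le_max_abs_abs (le_max_left _ _) (max_le hab (min_le_right _ _))

lemma integral_clamp_sub_mul_sub_clamp_nonneg {v : Ω → ℝ} (hv : ∀ᵐ x ∂μ, a ≤ v x ∧ v x ≤ b) :
    0 ≤ ∫ x, (max a (min (w x) b) - w x) * (v x - max a (min (w x) b)) ∂μ :=
  integral_nonneg_of_ae <| hv.mono fun x hx => clamp_sub_mul_sub_clamp_nonneg (w x) hx.1 hx.2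

lemma ae_eq_clamp_of_integral_mul_sub_nonneg [IsFiniteMeasure μ] (hab : a ≤ b) {u : Ω → ℝ}
    (hu : MemLp u 2 μ) (hw : MemLp w 2 μ) (hub : ∀ᵐ x ∂μ, a ≤ u x ∧ u x ≤ b)
    (h : 0 ≤ ∫ x, (u x - w x) * (max a (min (w x) b) - u x) ∂μ) :
    u =ᵐ[μ] fun x => max a (min (w x) b) := by
  set P := fun x => max a (min (w x) b)
  have hP : MemLp P 2 μ := memLp_clamp hab hw.1
  have hP_proj := integral_clamp_sub_mul_sub_clamp_nonneg (w := w) hub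
  have hsum : (∫ x, (u x - w x) * (P x - u x) ∂μ) + ∫ x, (P x - w x) * (u x - P x) ∂μ
      = -∫ x, (u x - P x) ^ 2 ∂μ := by
    have hint₁ : Integrable (fun x => (u x - w x) * (P x - u x)) μ :=
      (hu.sub hw).integrable_mul (hP.sub hu)
    have hint₂ : Integrable (fun x => (P x - w x) * (u x - P x)) μ :=
      (hP.sub hw).integrable_mul (hu.sub hP)
    rw [← integral_add hint₁ hint₂, ← integral_neg]
    congr 1 with x
    ring
  have hsq_int : Integrable (fun x => (u x - P x) ^ 2) μ := by
    simp only [sq]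
    exact (hu.sub hP).integrable_mul (hu.sub hP)
  have hsq_zero : ∫ x, (u x - P x) ^ 2 ∂μ = 0 :=
    le_antisymm (by linarith) (integral_nonneg fun x => sq_nonneg _)
  filter_upwards [(integral_eq_zero_iff_of_nonneg (fun x => sq_nonneg _) hsq_int).mp hsq_zero]
    with x hx
  exact sub_eq_zero.mp (pow_eq_zero_iff two_ne_zero |>.mp hx)

end Clamp

lemma variational_inequality_iff_ae_eq_clamp {Ω : Type*} [MeasurableSpace Ω] {μ : Measure Ω}
    [IsFiniteMeasure μ] {a b : ℝ} (hab : a ≤ b) {u : Lp ℝ 2 μ} {w : Ω → ℝ} (hw : MemLp w 2 μ)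
    (hu : ∀ᵐ x ∂μ, a ≤ u x ∧ u x ≤ b) :
    (∀ v : Lp ℝ 2 μ, (∀ᵐ x ∂μ, a ≤ v x ∧ v x ≤ b) → 0 ≤ ∫ x, (u x - w x) * (v x - u x) ∂μ) ↔
      ∀ᵐ x ∂μ, u x = max a (min (w x) b) := by
  constructor
  · intro h
    have hP := memLp_clamp (μ := μ) (p := 2) hab hw.1
    have hPv := h (hP.toLp _) <| hP.coeFn_toLp.mono fun x hx => by
      rw [hx]; exact ⟨le_max_left _ _, max_le hab (min_le_right _ _)⟩
    rw [integral_congr_ae (hP.coeFn_toLp.mono fun x hx => by rw [hx])] at hPv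
    exact ae_eq_clamp_of_integral_mul_sub_nonneg hab (Lp.memLp u) hw hu hPv
  · intro h v hv
    have hcongr : (fun x => (u x - w x) * (v x - u x)) =ᵐ[μ]
        fun x => (max a (min (w x) b) - w x) * (v x - max a (min (w x) b)) :=
      h.mono fun x hx => by simp only [hx]
    rw [integral_congr_ae hcongr]
    exact integral_clamp_sub_mul_sub_clamp_nonneg hv

/-- On a finite measure space `(Ω, μ)`, with `a ≤ b`, `γ > 0`,
`U_ad = {u ∈ L²(μ) : a ≤ u ≤ b μ-a.e.}`, `z ∈ L²(μ)` and `u ∈ U_ad`, the variational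
inequality `∫ (γu + z)(v − u) dμ ≥ 0` for all `v ∈ U_ad` holds iff
`u = max(a, min(−z/γ, b))` μ-a.e. (pointwise projection formula). -/
theorem stmt_0 {Ω : Type*} [MeasurableSpace Ω] (μ : Measure Ω) [IsFiniteMeasure μ]
    (a b : ℝ) (hab : a ≤ b) (γ : ℝ) (hγ : 0 < γ)
    (Uad : Set (Lp ℝ 2 μ))
    (hUad : Uad = {u : Lp ℝ 2 μ | ∀ᵐ x ∂μ, a ≤ u x ∧ u x ≤ b})
    (z u : Lp ℝ 2 μ) (hu : u ∈ Uad) :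
    (∀ v ∈ Uad, 0 ≤ ∫ x, (γ * u x + z x) * (v x - u x) ∂μ) ↔
      (∀ᵐ x ∂μ, u x = max a (min (-(z x) / γ) b)) := by
  subst hUad
  have hscale : ∀ v : Lp ℝ 2 μ, ∫ x, (γ * u x + z x) * (v x - u x) ∂μ
      = γ * ∫ x, (u x - -(z x) / γ) * (v x - u x) ∂μ := fun v => by
    rw [← integral_const_mul]
    congr 1 with x
    field_simp
    ring
  simp only [Set.mem_ofPred_eq, hscale, mul_nonneg_iff_of_pos_left hγ]
  have hw : MemLp (fun x => -(z x) / γ) 2 μ := by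
    simpa only [div_eq_mul_inv, Pi.neg_apply] using (Lp.memLp z).neg.mul_const γ⁻¹
  exact variational_inequality_iff_ae_eq_clamp hab hw hu
end

section
/- Let H and G be real Hilbert spaces, W a subspace of H, V a real vector space, T : V → G a linear map, a : V × V → ℝ a symmetric bilinear form, and b : W × V → ℝ a bilinear form. Fix f ∈ H, g ∈ G, d ∈ G. For u ∈ H, say that (p_u, y_u, r_u, z_u) ∈ V × W × V × W solves the discrete optimality system for u if: a(p_u, v) + b(y_u, v) = ⟨g, T v⟩_G for all v ∈ V; b(w, p_u) = −⟨f + u, w⟩_H for all w ∈ W; a(r_u, v) + b(z_u, v) = ⟨d − T p_u, T v⟩_G for all v ∈ V; and b(w, r_u) = 0 for all w ∈ W. If (p_u, y_u, r_u, z_u) solves the system for u and (p_v, y_v, r_v, z_v) solves it for v, then ⟨z_v − z_u, v − u⟩_H = ‖T(p_v − p_u)‖²_G. (This is the key identity (4.14) in the proof of Lemma 4.7, with T the normal trace map v_h ↦ v_h·n on Γ, a the stabilized discrete bilinear form a_h, b(w, v) = ∫_Ω w div v dx, and d = y_d.) -/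
open scoped RealInnerProductSpace

/-- The discrete optimality system for the control `u`: `(p, y, r, z) ∈ V × W × V × W`
satisfies `a(p, v) + b(y, v) = ⟨g, T v⟩_G` for all `v ∈ V`,
`b(w, p) = −⟨f + u, w⟩_H` for all `w ∈ W`,
`a(r, v) + b(z, v) = ⟨d − T p, T v⟩_G` for all `v ∈ V`, and
`b(w, r) = 0` for all `w ∈ W`. -/
def SolvesDiscreteSystem {H G V : Type*}
    [NormedAddCommGroup H] [InnerProductSpace ℝ H]
    [NormedAddCommGroup G] [InnerProductSpace ℝ G]
    [AddCommGroup V] [Module ℝ V]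
    (W : Submodule ℝ H) (T : V →ₗ[ℝ] G)
    (a : V →ₗ[ℝ] V →ₗ[ℝ] ℝ) (b : W →ₗ[ℝ] V →ₗ[ℝ] ℝ)
    (f : H) (g : G) (d : G) (u : H) (p : V) (y : W) (r : V) (z : W) : Prop :=
  (∀ v : V, a p v + b y v = ⟪g, T v⟫) ∧
  (∀ w : W, b w p = -⟪f + u, (w : H)⟫) ∧
  (∀ v : V, a r v + b z v = ⟪d - T p, T v⟫) ∧
  (∀ w : W, b w r = 0)

/-!
The system is affine in the data and the control, so the difference of two solutions solves the
system with zero data `f = g = d = 0` and control `v - u`. For such a homogeneous solution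
`(p, y, r, z)`, testing the equations with `z`, `p`, `r`, `y` gives
`⟨z, u⟩ = -b(z, p) = ‖T p‖² + a(r, p)`, and by symmetry `a(r, p) = a(p, r) = -b(y, r) = 0`.
-/

namespace SolvesDiscreteSystem

variable {H G V : Type*}
    [NormedAddCommGroup H] [InnerProductSpace ℝ H]
    [NormedAddCommGroup G] [InnerProductSpace ℝ G]
    [AddCommGroup V] [Module ℝ V]
    {W : Submodule ℝ H} {T : V →ₗ[ℝ] G}
    {a : V →ₗ[ℝ] V →ₗ[ℝ] ℝ} {b : W →ₗ[ℝ] V →ₗ[ℝ] ℝ}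

theorem sub {f : H} {g d : G} {u v : H} {pu pv : V} {yu yv : W} {ru rv : V} {zu zv : W}
    (hu : SolvesDiscreteSystem W T a b f g d u pu yu ru zu)
    (hv : SolvesDiscreteSystem W T a b f g d v pv yv rv zv) :
    SolvesDiscreteSystem W T a b 0 0 0 (v - u) (pv - pu) (yv - yu) (rv - ru) (zv - zu) := by
  obtain ⟨hu₁, hu₂, hu₃, hu₄⟩ := hu
  obtain ⟨hv₁, hv₂, hv₃, hv₄⟩ := hv
  refine ⟨fun x ↦ ?_, fun w ↦ ?_, fun x ↦ ?_, fun w ↦ ?_⟩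
  · simp only [map_sub, LinearMap.sub_apply, inner_zero_left]
    linarith [hu₁ x, hv₁ x]
  · simp only [map_sub, zero_add, inner_sub_left, inner_add_left] at hu₂ hv₂ ⊢
    linarith [hu₂ w, hv₂ w]
  · simp only [map_sub, LinearMap.sub_apply, zero_sub, inner_neg_left, inner_sub_left] at hu₃ hv₃ ⊢
    linarith [hu₃ x, hv₃ x]
  · simp only [map_sub, hu₄, hv₄, sub_zero]

theorem inner_eq_norm_sq {u : H} {p : V} {y : W} {r : V} {z : W}
    (ha : ∀ v w : V, a v w = a w v) (h : SolvesDiscreteSystem W T a b 0 0 0 u p y r z) :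
    ⟪(z : H), u⟫ = ‖T p‖ ^ 2 := by
  obtain ⟨h₁, h₂, h₃, h₄⟩ := h
  have hrp : a r p = 0 := by
    have := h₁ r
    rw [h₄ y, inner_zero_left, add_zero] at this
    rw [ha, this]
  have hzp := h₃ p
  rw [hrp, zero_add, zero_sub, inner_neg_left, real_inner_self_eq_norm_sq] at hzp
  have := h₂ z
  rw [zero_add, hzp, real_inner_comm] at this
  linarith

end SolvesDiscreteSystem

/-- If `(p_u, y_u, r_u, z_u)` solves the discrete optimality system for `u`
and `(p_v, y_v, r_v, z_v)` solves it for `v`, with `a` a symmetric bilinear form, then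
`⟨z_v − z_u, v − u⟩_H = ‖T(p_v − p_u)‖²_G` (identity (4.14) in the proof of Lemma 4.7). -/
theorem stmt_3 {H G V : Type*}
    [NormedAddCommGroup H] [InnerProductSpace ℝ H]
    [NormedAddCommGroup G] [InnerProductSpace ℝ G]
    [AddCommGroup V] [Module ℝ V]
    (W : Submodule ℝ H) (T : V →ₗ[ℝ] G)
    (a : V →ₗ[ℝ] V →ₗ[ℝ] ℝ) (b : W →ₗ[ℝ] V →ₗ[ℝ] ℝ)
    (ha : ∀ v w : V, a v w = a w v)
    (f : H) (g : G) (d : G) (u v : H)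
    (pu pv : V) (yu yv : W) (ru rv : V) (zu zv : W)
    (hu : SolvesDiscreteSystem W T a b f g d u pu yu ru zu)
    (hv : SolvesDiscreteSystem W T a b f g d v pv yv rv zv) :
    ⟪((zv : H) - (zu : H)), v - u⟫ = ‖T (pv - pu)‖ ^ 2 := by
  simpa only [Submodule.coe_sub] using (hu.sub hv).inner_eq_norm_sq ha
end

section
/- Let H and G be real Hilbert spaces, W a subspace of H, V a real vector space, T : V → G a linear map, a : V × V → ℝ a symmetric bilinear form, and b : W × V → ℝ a bilinear form. Fix f ∈ H, g ∈ G, d ∈ G and γ > 0. Suppose for u, v ∈ H the quadruples (p_u, y_u, r_u, z_u) and (p_v, y_v, r_v, z_v) solve the discrete optimality system for u and for v respectively, and define J′(u)(w) := γ⟨u, w⟩_H + ⟨z_u, w⟩_H and J′(v)(w) := γ⟨v, w⟩_H + ⟨z_v, w⟩_H. Then J′(v)(v − u) − J′(u)(v − u) = γ‖v − u‖²_H + ‖T(p_v − p_u)‖²_G. (This is Lemma 4.7.) -/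
open scoped RealInnerProductSpace

/-!
Subtracting the two optimality systems gives a linear system for the differences
`δp = p_v − p_u`, `δr = r_v − r_u`, `δz = z_v − z_u` with data `v − u`.
Testing the state equation with `δr` (which is `b`-orthogonal to `W`) gives `a(δp, δr) = 0`;
by symmetry of `a`, testing the adjoint equation with `δp` then gives
`b(δz, δp) = −‖T δp‖²`, while the constraint equation tested with `δz` gives
`b(δz, δp) = −⟨v − u, δz⟩`. Hence `⟨δz, v − u⟩ = ‖T δp‖²`, and the `γ`-terms
contribute `γ‖v − u‖²`.
-/

namespace SolvesDiscreteSystem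

variable {H G V : Type*}
    [NormedAddCommGroup H] [InnerProductSpace ℝ H]
    [NormedAddCommGroup G] [InnerProductSpace ℝ G]
    [AddCommGroup V] [Module ℝ V]
    {W : Submodule ℝ H} {T : V →ₗ[ℝ] G}
    {a : V →ₗ[ℝ] V →ₗ[ℝ] ℝ} {b : W →ₗ[ℝ] V →ₗ[ℝ] ℝ}
    {f : H} {g d : G} {u v : H} {pu pv : V} {yu yv : W} {ru rv : V} {zu zv : W}

theorem b_sub_state (hu : SolvesDiscreteSystem W T a b f g d u pu yu ru zu)
    (hv : SolvesDiscreteSystem W T a b f g d v pv yv rv zv) (w : W) :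
    b w (pv - pu) = -⟪v - u, (w : H)⟫ := by
  rw [map_sub, hv.2.1 w, hu.2.1 w, inner_sub_left, inner_add_left, inner_add_left]
  ring

theorem a_sub_state_sub_adjoint (hu : SolvesDiscreteSystem W T a b f g d u pu yu ru zu)
    (hv : SolvesDiscreteSystem W T a b f g d v pv yv rv zv) :
    a (pv - pu) (rv - ru) = 0 := by
  have hb : ∀ w : W, b w (rv - ru) = 0 := fun w => by
    rw [map_sub, hv.2.2.2 w, hu.2.2.2 w, sub_zero]
  have hu₁ := hu.1 (rv - ru)
  have hv₁ := hv.1 (rv - ru)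
  rw [hb] at hu₁ hv₁
  rw [LinearMap.map_sub₂]
  linarith

theorem b_sub_adjoint_sub_state (ha : ∀ v w : V, a v w = a w v)
    (hu : SolvesDiscreteSystem W T a b f g d u pu yu ru zu)
    (hv : SolvesDiscreteSystem W T a b f g d v pv yv rv zv) :
    b (zv - zu) (pv - pu) = -‖T (pv - pu)‖ ^ 2 := by
  have ha₀ : a (rv - ru) (pv - pu) = 0 := by rw [ha, a_sub_state_sub_adjoint hu hv]
  have hT : ⟪d - T pv, T (pv - pu)⟫ - ⟪d - T pu, T (pv - pu)⟫ = -‖T (pv - pu)‖ ^ 2 := by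
    rw [← inner_sub_left, sub_sub_sub_cancel_left, ← map_sub, ← neg_sub, map_neg,
      inner_neg_left, real_inner_self_eq_norm_sq]
  rw [LinearMap.map_sub₂, ← hT, ← hv.2.2.1, ← hu.2.2.1]
  rw [LinearMap.map_sub₂] at ha₀
  linarith

theorem inner_sub_adjoint_sub_control (ha : ∀ v w : V, a v w = a w v)
    (hu : SolvesDiscreteSystem W T a b f g d u pu yu ru zu)
    (hv : SolvesDiscreteSystem W T a b f g d v pv yv rv zv) :
    ⟪(zv : H) - zu, v - u⟫ = ‖T (pv - pu)‖ ^ 2 := by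
  have h := b_sub_state hu hv (zv - zu)
  rw [b_sub_adjoint_sub_state ha hu hv, Submodule.coe_sub, neg_inj] at h
  rw [real_inner_comm, h]

end SolvesDiscreteSystem

theorem stmt_4_general {H G V : Type*}
    [NormedAddCommGroup H] [InnerProductSpace ℝ H]
    [NormedAddCommGroup G] [InnerProductSpace ℝ G]
    [AddCommGroup V] [Module ℝ V]
    (W : Submodule ℝ H) (T : V →ₗ[ℝ] G)
    (a : V →ₗ[ℝ] V →ₗ[ℝ] ℝ) (b : W →ₗ[ℝ] V →ₗ[ℝ] ℝ)
    (ha : ∀ v w : V, a v w = a w v)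
    (f : H) (g : G) (d : G) (γ : ℝ) (u v : H)
    (pu pv : V) (yu yv : W) (ru rv : V) (zu zv : W)
    (hu : SolvesDiscreteSystem W T a b f g d u pu yu ru zu)
    (hv : SolvesDiscreteSystem W T a b f g d v pv yv rv zv)
    (J'u J'v : H → ℝ)
    (hJ'u : ∀ w : H, J'u w = γ * ⟪u, w⟫ + ⟪(zu : H), w⟫)
    (hJ'v : ∀ w : H, J'v w = γ * ⟪v, w⟫ + ⟪(zv : H), w⟫) :
    J'v (v - u) - J'u (v - u) = γ * ‖v - u‖ ^ 2 + ‖T (pv - pu)‖ ^ 2 := by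
  have hJ : J'v (v - u) - J'u (v - u) = γ * ⟪v - u, v - u⟫ + ⟪(zv : H) - zu, v - u⟫ := by
    rw [hJ'u, hJ'v, inner_sub_left, inner_sub_left (zv : H)]
    ring
  rw [hJ, real_inner_self_eq_norm_sq, SolvesDiscreteSystem.inner_sub_adjoint_sub_control ha hu hv]

/-- **Lemma 4.7.** If `(p_u, y_u, r_u, z_u)` and `(p_v, y_v, r_v, z_v)` solve
the discrete optimality system for `u` and `v` respectively, `a` is symmetric, `γ > 0`, and
`J′(u)(w) = γ⟨u, w⟩_H + ⟨z_u, w⟩_H`, `J′(v)(w) = γ⟨v, w⟩_H + ⟨z_v, w⟩_H`, then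
`J′(v)(v − u) − J′(u)(v − u) = γ‖v − u‖²_H + ‖T(p_v − p_u)‖²_G`. -/
theorem stmt_4 {H G V : Type*}
    [NormedAddCommGroup H] [InnerProductSpace ℝ H]
    [NormedAddCommGroup G] [InnerProductSpace ℝ G]
    [AddCommGroup V] [Module ℝ V]
    (W : Submodule ℝ H) (T : V →ₗ[ℝ] G)
    (a : V →ₗ[ℝ] V →ₗ[ℝ] ℝ) (b : W →ₗ[ℝ] V →ₗ[ℝ] ℝ)
    (ha : ∀ v w : V, a v w = a w v)
    (f : H) (g : G) (d : G) (γ : ℝ) (hγ : 0 < γ) (u v : H)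
    (pu pv : V) (yu yv : W) (ru rv : V) (zu zv : W)
    (hu : SolvesDiscreteSystem W T a b f g d u pu yu ru zu)
    (hv : SolvesDiscreteSystem W T a b f g d v pv yv rv zv)
    (J'u J'v : H → ℝ)
    (hJ'u : ∀ w : H, J'u w = γ * ⟪u, w⟫ + ⟪(zu : H), w⟫)
    (hJ'v : ∀ w : H, J'v w = γ * ⟪v, w⟫ + ⟪(zv : H), w⟫) :
    J'v (v - u) - J'u (v - u) = γ * ‖v - u‖ ^ 2 + ‖T (pv - pu)‖ ^ 2 :=
  stmt_4_general W T a b ha f g d γ u v pu pv yu yv ru rv zu zv hu hv J'u J'v hJ'u hJ'v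
end

section
/- Let H and G be real Hilbert spaces, W a subspace of H, V a real vector space, T : V → G a linear map, a : V × V → ℝ a symmetric bilinear form, and b : W × V → ℝ a bilinear form. Fix f ∈ H, g ∈ G, d ∈ G, γ > 0, and let U_ad ⊆ H. Suppose u, u_h ∈ U_ad, the quadruples (p_u, y_u, r_u, z_u) and (p_{u_h}, y_{u_h}, r_{u_h}, z_{u_h}) solve the discrete optimality system for u and for u_h respectively, and z ∈ H satisfies: ⟨γu + z, v − u⟩_H ≥ 0 for all v ∈ U_ad (continuous variational inequality) and ⟨γu_h + z_{u_h}, v − u_h⟩_H ≥ 0 for all v ∈ U_ad (discrete variational inequality). Then γ‖u − u_h‖²_H + ‖T(p_u − p_{u_h})‖²_G ≤ ⟨z_u − z, u − u_h⟩_H. (This is the key estimate (4.18)–(4.19) in the proof of Theorem 4.1, prior to invoking auxiliary error bounds.) -/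
/-! The difference of two solutions of the discrete optimality system solves the homogeneous
system (`f = g = d = 0`) for the difference of the controls; testing its state equations with
the adjoint variables and using the symmetry of `a` identifies `⟪z, u⟫` with `‖T p‖²`. The two
variational inequalities, tested with each other's control and added, bound `γ‖u - u_h‖²` by
`⟪z_{u_h} - z, u - u_h⟫`, and `z_{u_h} = z_u - (z_u - z_{u_h})`. -/

open scoped RealInnerProductSpace

section DiscreteSystem

variable {H G V : Type*}
    [NormedAddCommGroup H] [InnerProductSpace ℝ H]
    [NormedAddCommGroup G] [InnerProductSpace ℝ G]
    [AddCommGroup V] [Module ℝ V]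
    {W : Submodule ℝ H} {T : V →ₗ[ℝ] G}
    {a : V →ₗ[ℝ] V →ₗ[ℝ] ℝ} {b : W →ₗ[ℝ] V →ₗ[ℝ] ℝ}
    {f : H} {g d : G} {u : H} {p : V} {y : W} {r : V} {z : W}

theorem SolvesDiscreteSystem.sub_s6 {u' : H} {p' : V} {y' : W} {r' : V} {z' : W}
    (h : SolvesDiscreteSystem W T a b f g d u p y r z)
    (h' : SolvesDiscreteSystem W T a b f g d u' p' y' r' z') :
    SolvesDiscreteSystem W T a b 0 0 0 (u - u') (p - p') (y - y') (r - r') (z - z') := by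
  obtain ⟨h₁, h₂, h₃, h₄⟩ := h
  obtain ⟨h₁', h₂', h₃', h₄'⟩ := h'
  refine ⟨fun v => ?_, fun w => ?_, fun v => ?_, fun w => ?_⟩
  · simp only [map_sub, LinearMap.sub_apply, inner_zero_left]
    linarith [h₁ v, h₁' v]
  · simp only [map_sub, zero_add, inner_sub_left]
    simp only [inner_add_left] at h₂ h₂'
    linarith [h₂ w, h₂' w]
  · simp only [map_sub, LinearMap.sub_apply, zero_sub, inner_neg_left, inner_sub_left]
    simp only [inner_sub_left] at h₃ h₃'
    linarith [h₃ v, h₃' v]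
  · rw [map_sub, h₄ w, h₄' w, sub_zero]

theorem SolvesDiscreteSystem.inner_add_eq (ha : ∀ v w : V, a v w = a w v)
    (h : SolvesDiscreteSystem W T a b f g d u p y r z) :
    ⟪(z : H), f + u⟫ = ⟪g, T r⟫ - ⟪d - T p, T p⟫ := by
  obtain ⟨h₁, h₂, h₃, h₄⟩ := h
  rw [real_inner_comm, ← neg_neg ⟪f + u, (z : H)⟫, ← h₂ z]
  linarith [h₁ r, h₃ p, h₄ y, ha p r]

theorem SolvesDiscreteSystem.inner_eq_norm_sq_s6 (ha : ∀ v w : V, a v w = a w v)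
    (h : SolvesDiscreteSystem W T a b 0 0 0 u p y r z) :
    ⟪(z : H), u⟫ = ‖T p‖ ^ 2 := by
  simpa [real_inner_self_eq_norm_sq] using h.inner_add_eq ha

end DiscreteSystem

theorem mul_norm_sub_sq_le_of_variationalInequalities {H : Type*} [NormedAddCommGroup H]
    [InnerProductSpace ℝ H] {U : Set H} {γ : ℝ} {u u' z z' : H} (hu : u ∈ U) (hu' : u' ∈ U)
    (hVI : ∀ v ∈ U, 0 ≤ ⟪γ • u + z, v - u⟫) (hVI' : ∀ v ∈ U, 0 ≤ ⟪γ • u' + z', v - u'⟫) :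
    γ * ‖u - u'‖ ^ 2 ≤ ⟪z' - z, u - u'⟫ := by
  have h := hVI u' hu'
  have h' := hVI' u hu
  rw [← neg_sub, inner_neg_right] at h
  rw [← real_inner_self_eq_norm_sq]
  simp only [inner_add_left, inner_sub_left, real_inner_smul_left] at h h' ⊢
  linarith

theorem stmt_6_general {H G V : Type*}
    [NormedAddCommGroup H] [InnerProductSpace ℝ H]
    [NormedAddCommGroup G] [InnerProductSpace ℝ G]
    [AddCommGroup V] [Module ℝ V]
    (W : Submodule ℝ H) (T : V →ₗ[ℝ] G)
    (a : V →ₗ[ℝ] V →ₗ[ℝ] ℝ) (b : W →ₗ[ℝ] V →ₗ[ℝ] ℝ)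
    (ha : ∀ v w : V, a v w = a w v)
    (f : H) (g : G) (d : G) (γ : ℝ)
    (Uad : Set H) (u uh : H) (hu : u ∈ Uad) (huh : uh ∈ Uad)
    (pu puh : V) (yu yuh : W) (ru ruh : V) (zu zuh : W)
    (hsysu : SolvesDiscreteSystem W T a b f g d u pu yu ru zu)
    (hsysuh : SolvesDiscreteSystem W T a b f g d uh puh yuh ruh zuh)
    (z : H)
    (hVIcont : ∀ v ∈ Uad, 0 ≤ ⟪γ • u + z, v - u⟫)
    (hVIdisc : ∀ v ∈ Uad, 0 ≤ ⟪γ • uh + (zuh : H), v - uh⟫) :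
    γ * ‖u - uh‖ ^ 2 + ‖T (pu - puh)‖ ^ 2 ≤ ⟪(zu : H) - z, u - uh⟫ := by
  have hVI := mul_norm_sub_sq_le_of_variationalInequalities hu huh hVIcont hVIdisc
  have hdiff := (hsysu.sub_s6 hsysuh).inner_eq_norm_sq_s6 ha
  calc γ * ‖u - uh‖ ^ 2 + ‖T (pu - puh)‖ ^ 2
      ≤ ⟪(zuh : H) - z, u - uh⟫ + ⟪((zu - zuh : W) : H), u - uh⟫ := by rw [hdiff]; linarith
    _ = ⟪(zu : H) - z, u - uh⟫ := by
      rw [← inner_add_left, Submodule.coe_sub, sub_add_sub_cancel']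

/-- **estimate (4.18)–(4.19) in Theorem 4.1.** Let `u, u_h ∈ U_ad`, let
`(p_u, y_u, r_u, z_u)` and `(p_{u_h}, y_{u_h}, r_{u_h}, z_{u_h})` solve the discrete
optimality system for `u` and `u_h` respectively (with `a` symmetric), and let `z ∈ H`
satisfy the continuous variational inequality `⟨γu + z, v − u⟩ ≥ 0` for all `v ∈ U_ad`,
while `⟨γu_h + z_{u_h}, v − u_h⟩ ≥ 0` for all `v ∈ U_ad` (discrete variational
inequality). Then `γ‖u − u_h‖²_H + ‖T(p_u − p_{u_h})‖²_G ≤ ⟨z_u − z, u − u_h⟩_H`. -/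
theorem stmt_6 {H G V : Type*}
    [NormedAddCommGroup H] [InnerProductSpace ℝ H]
    [NormedAddCommGroup G] [InnerProductSpace ℝ G]
    [AddCommGroup V] [Module ℝ V]
    (W : Submodule ℝ H) (T : V →ₗ[ℝ] G)
    (a : V →ₗ[ℝ] V →ₗ[ℝ] ℝ) (b : W →ₗ[ℝ] V →ₗ[ℝ] ℝ)
    (ha : ∀ v w : V, a v w = a w v)
    (f : H) (g : G) (d : G) (γ : ℝ) (hγ : 0 < γ)
    (Uad : Set H) (u uh : H) (hu : u ∈ Uad) (huh : uh ∈ Uad)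
    (pu puh : V) (yu yuh : W) (ru ruh : V) (zu zuh : W)
    (hsysu : SolvesDiscreteSystem W T a b f g d u pu yu ru zu)
    (hsysuh : SolvesDiscreteSystem W T a b f g d uh puh yuh ruh zuh)
    (z : H)
    (hVIcont : ∀ v ∈ Uad, 0 ≤ ⟪γ • u + z, v - u⟫)
    (hVIdisc : ∀ v ∈ Uad, 0 ≤ ⟪γ • uh + (zuh : H), v - uh⟫) :
    γ * ‖u - uh‖ ^ 2 + ‖T (pu - puh)‖ ^ 2 ≤ ⟪(zu : H) - z, u - uh⟫ :=
  stmt_6_general W T a b ha f g d γ Uad u uh hu huh pu puh yu yuh ru ruh zu zuh hsysu hsysuh z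
    hVIcont hVIdisc
end

section
/- Let H be a real inner product space, W a subspace of H, and V a real normed space. Let a : V × V → ℝ be a bilinear form that is continuous and coercive, i.e. there exist M > 0 and α > 0 with |a(v, w)| ≤ M‖v‖‖w‖ and a(v, v) ≥ α‖v‖² for all v, w ∈ V, and let b : W × V → ℝ be a bilinear form satisfying the inf-sup condition: there is β > 0 such that for every w ∈ W, β‖w‖ ≤ sup_{v ∈ V, v ≠ 0} b(w, v)/‖v‖. Suppose Δp ∈ V, Δy ∈ W, and e ∈ H satisfy a(Δp, v) + b(Δy, v) = 0 for all v ∈ V and b(w, Δp) = ⟨e, w⟩ for all w ∈ W. Then ‖Δy‖ ≤ (M/β)‖Δp‖, ‖Δp‖ ≤ (M/(αβ))‖e‖, and consequently ‖Δy‖ ≤ (M²/(αβ²))‖e‖. (This abstracts the estimates (4.15)–(4.17) bounding ‖y_h(u) − y_h‖ and ‖p_h(u) − p_h‖ by C‖u − u_h‖ in the proof of Theorem 4.1.) -/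
open scoped RealInnerProductSpace

/-! The Galerkin-orthogonality relation `a(Δp, ·) = -b(Δy, ·)` lets the inf-sup condition
control `Δy` by `Δp` through the continuity of `a`, while testing the same relation with
`Δp` itself turns coercivity into `α‖Δp‖² ≤ -⟪e, Δy⟫ ≤ ‖e‖‖Δy‖`. Chaining the two
estimates bounds `‖Δp‖`, and then `‖Δy‖`, by a multiple of `‖e‖`. -/

theorem le_of_infSup_of_le_mul_norm {V : Type*} [NormedAddCommGroup V] (f : V → ℝ) {r C : ℝ}
    (hinfsup : ∀ c : ℝ, c < r → ∃ v : V, v ≠ 0 ∧ c < f v / ‖v‖)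
    (hbound : ∀ v : V, f v ≤ C * ‖v‖) : r ≤ C := by
  by_contra! hlt
  obtain ⟨v, hv, hCv⟩ := hinfsup C hlt
  have : f v / ‖v‖ ≤ C := (div_le_iff₀ (norm_pos_iff.mpr hv)).mpr (hbound v)
  linarith

theorem mul_le_of_mul_sq_le_mul {c x K : ℝ} (hK : 0 ≤ K) (hx : 0 ≤ x)
    (h : c * x ^ 2 ≤ K * x) : c * x ≤ K := by
  rcases hx.eq_or_lt with rfl | hpos
  · simpa using hK
  · exact le_of_mul_le_mul_right (by linarith) hpos

section SaddlePoint

variable {V W : Type*} [NormedAddCommGroup V] [NormedSpace ℝ V]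
  [NormedAddCommGroup W] [NormedSpace ℝ W]
  {a : V →ₗ[ℝ] V →ₗ[ℝ] ℝ} {b : W →ₗ[ℝ] V →ₗ[ℝ] ℝ} {Δp : V} {Δy : W}

theorem infSup_mul_norm_le_of_saddle {M β : ℝ}
    (hcont : ∀ v w : V, |a v w| ≤ M * ‖v‖ * ‖w‖)
    (hinfsup : ∀ c : ℝ, c < β * ‖Δy‖ → ∃ v : V, v ≠ 0 ∧ c < b Δy v / ‖v‖)
    (heq : ∀ v : V, a Δp v + b Δy v = 0) :
    β * ‖Δy‖ ≤ M * ‖Δp‖ := by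
  refine le_of_infSup_of_le_mul_norm (b Δy) hinfsup fun v => ?_
  calc b Δy v = -a Δp v := by linarith [heq v]
    _ ≤ |a Δp v| := neg_le_abs _
    _ ≤ M * ‖Δp‖ * ‖v‖ := hcont Δp v

theorem coercive_mul_norm_sq_le_of_saddle {α : ℝ}
    (hcoer : ∀ v : V, α * ‖v‖ ^ 2 ≤ a v v) (heq : ∀ v : V, a Δp v + b Δy v = 0) :
    α * ‖Δp‖ ^ 2 ≤ -b Δy Δp :=
  (hcoer Δp).trans (by linarith [heq Δp])

end SaddlePoint

/-- **abstracting (4.15)–(4.17) in Theorem 4.1.** Let `H` be a real inner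
product space, `W` a subspace of `H` (with the induced norm), `V` a real normed space.
Let `a : V × V → ℝ` be bilinear, continuous (`|a(v,w)| ≤ M‖v‖‖w‖`) and coercive
(`a(v,v) ≥ α‖v‖²`), and let `b : W × V → ℝ` be bilinear satisfying the inf-sup condition
`β‖w‖ ≤ sup_{v ≠ 0} b(w,v)/‖v‖` for every `w ∈ W` (stated here in the equivalent form:
every real number below `β‖w‖` is exceeded by some quotient `b(w,v)/‖v‖` with `v ≠ 0`).
If `a(Δp, v) + b(Δy, v) = 0` for all `v ∈ V` and `b(w, Δp) = ⟨e, w⟩` for all `w ∈ W`,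
then `‖Δy‖ ≤ (M/β)‖Δp‖`, `‖Δp‖ ≤ (M/(αβ))‖e‖` and `‖Δy‖ ≤ (M²/(αβ²))‖e‖`. -/
theorem stmt_7 {H V : Type*}
    [NormedAddCommGroup H] [InnerProductSpace ℝ H]
    [NormedAddCommGroup V] [NormedSpace ℝ V]
    (W : Submodule ℝ H)
    (a : V →ₗ[ℝ] V →ₗ[ℝ] ℝ) (b : W →ₗ[ℝ] V →ₗ[ℝ] ℝ)
    (M α β : ℝ) (hM : 0 < M) (hα : 0 < α) (hβ : 0 < β)
    (hcont : ∀ v w : V, |a v w| ≤ M * ‖v‖ * ‖w‖)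
    (hcoer : ∀ v : V, α * ‖v‖ ^ 2 ≤ a v v)
    (hinfsup : ∀ w : W, ∀ c : ℝ, c < β * ‖w‖ → ∃ v : V, v ≠ 0 ∧ c < b w v / ‖v‖)
    (Δp : V) (Δy : W) (e : H)
    (heq1 : ∀ v : V, a Δp v + b Δy v = 0)
    (heq2 : ∀ w : W, b w Δp = ⟪e, (w : H)⟫) :
    ‖Δy‖ ≤ (M / β) * ‖Δp‖ ∧ ‖Δp‖ ≤ (M / (α * β)) * ‖e‖ ∧
      ‖Δy‖ ≤ (M ^ 2 / (α * β ^ 2)) * ‖e‖ := by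
  have hy : β * ‖Δy‖ ≤ M * ‖Δp‖ := infSup_mul_norm_le_of_saddle hcont (hinfsup Δy) heq1
  have hp_sq : α * ‖Δp‖ ^ 2 ≤ ‖e‖ * ‖Δy‖ := by
    calc α * ‖Δp‖ ^ 2 ≤ -b Δy Δp := coercive_mul_norm_sq_le_of_saddle hcoer heq1
      _ = -⟪e, (Δy : H)⟫ := by rw [heq2]
      _ ≤ ‖e‖ * ‖Δy‖ := (neg_le_abs _).trans (abs_real_inner_le_norm e Δy)
  have hp : α * β * ‖Δp‖ ≤ M * ‖e‖ := by
    refine mul_le_of_mul_sq_le_mul (by positivity) (norm_nonneg Δp) ?_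
    calc α * β * ‖Δp‖ ^ 2 = β * (α * ‖Δp‖ ^ 2) := by ring
      _ ≤ β * (‖e‖ * ‖Δy‖) := by gcongr
      _ = ‖e‖ * (β * ‖Δy‖) := by ring
      _ ≤ ‖e‖ * (M * ‖Δp‖) := by gcongr
      _ = M * ‖e‖ * ‖Δp‖ := by ring
  refine ⟨?_, ?_, ?_⟩
  · rw [div_mul_eq_mul_div, le_div_iff₀ hβ]
    linarith
  · rw [div_mul_eq_mul_div, le_div_iff₀ (by positivity)]
    linarith
  · rw [div_mul_eq_mul_div, le_div_iff₀ (by positivity)]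
    calc ‖Δy‖ * (α * β ^ 2) = α * β * (β * ‖Δy‖) := by ring
      _ ≤ α * β * (M * ‖Δp‖) := by gcongr
      _ = M * (α * β * ‖Δp‖) := by ring
      _ ≤ M * (M * ‖e‖) := by gcongr
      _ = M ^ 2 * ‖e‖ := by ring
end

section
/- Let H and G be real Hilbert spaces, W a subspace of H, V a real vector space, T : V → G a linear map, a : V × V → ℝ a symmetric bilinear form, and b : W × V → ℝ a bilinear form. Suppose d ∈ W and η ∈ G, and there exist ψ ∈ V, φ ∈ W, and Δr ∈ V such that: a(ψ, v) + b(φ, v) = 0 for all v ∈ V; b(w, ψ) = ⟨d, w⟩_H for all w ∈ W; a(Δr, v) + b(d, v) = ⟨η, T v⟩_G for all v ∈ V; and b(w, Δr) = 0 for all w ∈ W. Then ‖d‖²_H = ⟨η, T ψ⟩_G. (This is the algebraic duality identity underlying the estimate (4.29) of ‖z_h(u) − z_h‖ in the proof of Theorem 4.1, where d = z_h(u) − z_h, η = T(p_h − p_h(u)), and (ψ, φ) is the discrete solution of the dual problem.) -/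
open scoped RealInnerProductSpace

theorem stmt_8_general {H G V : Type*}
    [NormedAddCommGroup H] [InnerProductSpace ℝ H]
    [NormedAddCommGroup G] [InnerProductSpace ℝ G]
    [AddCommGroup V] [Module ℝ V]
    (W : Submodule ℝ H) (T : V →ₗ[ℝ] G)
    (a : V →ₗ[ℝ] V →ₗ[ℝ] ℝ) (b : W →ₗ[ℝ] V →ₗ[ℝ] ℝ)
    (ha : ∀ v w : V, a v w = a w v)
    (d : W) (η : G) (ψ : V) (φ : W) (Δr : V)
    (h1 : ∀ v : V, a ψ v + b φ v = 0)
    (h2 : ∀ w : W, b w ψ = ⟪(d : H), (w : H)⟫)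
    (h3 : ∀ v : V, a Δr v + b d v = ⟪η, T v⟫)
    (h4 : ∀ w : W, b w Δr = 0) :
    ‖(d : H)‖ ^ 2 = ⟪η, T ψ⟫ := by
  have ha_Δr_ψ : a Δr ψ = 0 := by
    rw [ha]
    linarith [h1 Δr, h4 φ]
  calc ‖(d : H)‖ ^ 2 = b d ψ := by rw [h2, real_inner_self_eq_norm_sq]
    _ = ⟪η, T ψ⟫ := by linarith [h3 ψ]

/-- **duality identity behind (4.29) in Theorem 4.1.** Let `H, G` be real
Hilbert spaces, `W` a subspace of `H`, `V` a real vector space, `T : V → G` linear,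
`a : V × V → ℝ` a symmetric bilinear form, `b : W × V → ℝ` bilinear. Suppose `d ∈ W`,
`η ∈ G`, and there exist `ψ ∈ V`, `φ ∈ W`, `Δr ∈ V` with
`a(ψ, v) + b(φ, v) = 0` for all `v ∈ V`, `b(w, ψ) = ⟨d, w⟩_H` for all `w ∈ W`,
`a(Δr, v) + b(d, v) = ⟨η, T v⟩_G` for all `v ∈ V`, and `b(w, Δr) = 0` for all `w ∈ W`.
Then `‖d‖²_H = ⟨η, T ψ⟩_G`. -/
theorem stmt_8 {H G V : Type*}
    [NormedAddCommGroup H] [InnerProductSpace ℝ H] [CompleteSpace H]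
    [NormedAddCommGroup G] [InnerProductSpace ℝ G] [CompleteSpace G]
    [AddCommGroup V] [Module ℝ V]
    (W : Submodule ℝ H) (T : V →ₗ[ℝ] G)
    (a : V →ₗ[ℝ] V →ₗ[ℝ] ℝ) (b : W →ₗ[ℝ] V →ₗ[ℝ] ℝ)
    (ha : ∀ v w : V, a v w = a w v)
    (d : W) (η : G) (ψ : V) (φ : W) (Δr : V)
    (h1 : ∀ v : V, a ψ v + b φ v = 0)
    (h2 : ∀ w : W, b w ψ = ⟪(d : H), (w : H)⟫)
    (h3 : ∀ v : V, a Δr v + b d v = ⟪η, T v⟫)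
    (h4 : ∀ w : W, b w Δr = 0) :
    ‖(d : H)‖ ^ 2 = ⟪η, T ψ⟫ :=
  stmt_8_general W T a b ha d η ψ φ Δr h1 h2 h3 h4
end
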